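/- arXiv:2008.13163 — 2 statements merged into one kernel-verified Lean document; each statement's English description precedes it below -/
import Mathlib

section
/- ∫₀¹ L(1,1;x)/x² dx = ζ(2)/4 - (log 2)²/2, where L(1,1;x) = (1/4) ∑_{0<m<n} x^{2n}/(m n). -/
open Real Filter Set Topology

set_option maxHeartbeats 1000000

noncomputable section

def harm (k : ℕ) : ℝ := ∑ i ∈ Finset.range k, (1:ℝ)/(i+1)

lemma harm_nonneg (k : ℕ) : 0 ≤ harm k :=
  Finset.sum_nonneg fun i _ => by positivity

lemma harm_succ (k : ℕ) : harm (k+1) = harm k + 1/((k:ℝ)+1) := by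
  simp [harm, Finset.sum_range_succ]

lemma harm_le_linear (k : ℕ) : harm k ≤ k := by
  induction k with
  | zero => simp [harm]
  | succ n ih =>
    rw [harm_succ]
    push_cast
    have h1 : 1/((n:ℝ)+1) ≤ 1 := by
      rw [div_le_one (by positivity)]; linarith [Nat.cast_nonneg (α := ℝ) n]
    linarith

lemma harm_le_sqrt (k : ℕ) : harm k ≤ 2 * Real.sqrt k := by
  induction k with
  | zero => simp [harm]
  | succ n ih =>
    rw [harm_succ]
    have ha : Real.sqrt ((n:ℕ)+1 : ℕ) = Real.sqrt ((n:ℝ)+1) := by push_cast; ring_nf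
    have h0 : (0:ℝ) ≤ (n:ℝ) := Nat.cast_nonneg n
    set a := Real.sqrt ((n:ℝ)+1) with ha'
    set b := Real.sqrt (n:ℝ) with hb'
    have hb0 : 0 ≤ b := Real.sqrt_nonneg _
    have ha0 : 0 < a := Real.sqrt_pos.mpr (by linarith)
    have ha2 : a^2 = (n:ℝ)+1 := Real.sq_sqrt (by linarith)
    have hb2 : b^2 = (n:ℝ) := Real.sq_sqrt h0
    have hba : b ≤ a := Real.sqrt_le_sqrt (by linarith)
    have ha1 : 1 ≤ a := by nlinarith
    have key : 1/((n:ℝ)+1) ≤ 2*(a-b) := by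
      rw [div_le_iff₀ (by positivity)]
      nlinarith [sq_nonneg (a-b), sq_nonneg (a+b)]
    rw [ha]
    linarith [ih]


lemma cube32 {x : ℝ} (hx : 0 < x) : x ^ (-(3/2) : ℝ) = (x * Real.sqrt x)⁻¹ := by
  have h1 : x ^ ((3/2) : ℝ) = x * Real.sqrt x := by
    rw [show ((3:ℝ)/2) = 1 + 1/2 by norm_num, Real.rpow_add hx, Real.rpow_one,
      ← Real.sqrt_eq_rpow]
  rw [← h1, ← Real.rpow_neg hx.le]

lemma summable_rpow32 : Summable (fun k : ℕ => (((k:ℝ)+1) * Real.sqrt ((k:ℝ)+1))⁻¹) := by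
  have base : Summable (fun n : ℕ => (n:ℝ) ^ (-(3/2) : ℝ)) :=
    Real.summable_nat_rpow.mpr (by norm_num)
  have h := (summable_nat_add_iff 1).2 base
  refine h.congr fun k => ?_
  push_cast
  exact cube32 (by positivity)

lemma summable_harm_sq : Summable (fun k : ℕ => harm (k+1) / ((k:ℝ)+1)^2) := by
  refine Summable.of_nonneg_of_le (fun k => div_nonneg (harm_nonneg _) (by positivity))
    (fun k => ?_) (summable_rpow32.mul_left 2)
  have h1 : harm (k+1) ≤ 2 * Real.sqrt ((k:ℝ)+1) := by
    have := harm_le_sqrt (k+1); push_cast at this; exact this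
  have hs : 0 < Real.sqrt ((k:ℝ)+1) := Real.sqrt_pos.mpr (by positivity)
  have hsq : Real.sqrt ((k:ℝ)+1) * Real.sqrt ((k:ℝ)+1) = (k:ℝ)+1 :=
    Real.mul_self_sqrt (by positivity)
  rw [div_le_iff₀ (by positivity)]
  have heq : 2 * (((k:ℝ)+1) * Real.sqrt ((k:ℝ)+1))⁻¹ * (((k:ℝ)+1)^2) = 2 * Real.sqrt ((k:ℝ)+1) := by
    field_simp
    nlinarith [hsq]
  rw [heq]
  exact h1

lemma pow_mul_one_sub_le {x : ℝ} (h0 : 0 ≤ x) (h1 : x ≤ 1) (m : ℕ) :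
    x^m * (1-x) ≤ 1/((m:ℝ)+1) := by
  have hx1 : (0:ℝ) ≤ 1 - x := by linarith
  have hsum : ((m:ℝ)+1) * x^m ≤ ∑ j ∈ Finset.range (m+1), x^j := by
    have := Finset.card_nsmul_le_sum (Finset.range (m+1)) (fun j => x^j) (x^m)
      (fun j hj => pow_le_pow_of_le_one h0 h1 (by
        simpa using Nat.le_of_lt_succ (Finset.mem_range.mp hj)))
    simpa [nsmul_eq_mul, mul_comm] using this
  have hgeom : (1-x) * ∑ j ∈ Finset.range (m+1), x^j = 1 - x^(m+1) := by
    have := geom_sum_mul x (m+1)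
    nlinarith [this]
  have hle : ((m:ℝ)+1) * (x^m * (1-x)) ≤ 1 := by
    calc ((m:ℝ)+1) * (x^m * (1-x)) = (1-x) * (((m:ℝ)+1) * x^m) := by ring
      _ ≤ (1-x) * ∑ j ∈ Finset.range (m+1), x^j :=
        mul_le_mul_of_nonneg_left hsum hx1
      _ = 1 - x^(m+1) := hgeom
      _ ≤ 1 := by nlinarith [pow_nonneg h0 (m+1)]
  rw [le_div_iff₀ (by positivity)]
  nlinarith [hle]


def P (x : ℝ) : ℝ := ∑' n : ℕ, x ^ (n+1) / ((n:ℝ)+1)^2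

lemma summable_inv_sq : Summable (fun n : ℕ => 1 / ((n:ℝ)+1)^2) := by
  have h := (summable_nat_add_iff 1).2 hasSum_zeta_two.summable
  refine h.congr fun k => ?_
  push_cast
  ring

lemma P_zero : P 0 = 0 := by
  simp [P]

lemma P_one : P 1 = π^2/6 := by
  have h := hasSum_zeta_two.tsum_eq
  rw [Summable.tsum_eq_zero_add hasSum_zeta_two.summable] at h
  simp only [Nat.cast_zero, one_pow] at h
  unfold P
  rw [show ∑' (n : ℕ), (1:ℝ) ^ (n + 1) / ((n:ℝ)+1) ^ 2
      = ∑' (n : ℕ), 1 / ((n:ℕ)+1:ℝ) ^ 2 by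
    refine tsum_congr fun n => by push_cast; ring]
  rw [← h]
  norm_num

lemma P_contOn : ContinuousOn P (Icc (-1:ℝ) 1) := by
  refine continuousOn_tsum (fun n => (Continuous.continuousOn (by continuity)))
    summable_inv_sq (fun n x hx => ?_)
  have hx1 : |x| ≤ 1 := abs_le.mpr ⟨hx.1, hx.2⟩
  have heq : ‖x ^ (n+1) / ((n:ℝ)+1)^2‖ = |x|^(n+1) / ((n:ℝ)+1)^2 := by
    rw [norm_div, norm_pow, Real.norm_eq_abs, norm_pow, Real.norm_eq_abs,
      abs_of_nonneg (by positivity : (0:ℝ) ≤ (n:ℝ)+1)]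
  rw [heq]
  gcongr
  exact pow_le_one₀ (abs_nonneg x) hx1

lemma P_hasDerivAt {y : ℝ} (hy : y ∈ Ioo (0:ℝ) 1) : HasDerivAt P (-Real.log (1-y)/y) y := by
  obtain ⟨hy0, hy1⟩ := hy
  set r : ℝ := (1+y)/2 with hr
  have hr1 : r < 1 := by rw [hr]; linarith
  have hyr : y < r := by rw [hr]; linarith
  have hr0 : 0 < r := by rw [hr]; linarith
  have habs : |y| < 1 := abs_lt.mpr ⟨by linarith, hy1⟩
  have hD : HasDerivAt P (∑' n : ℕ, y^n/((n:ℝ)+1)) y := by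
    refine hasDerivAt_tsum_of_isPreconnected (u := fun n : ℕ => r^n)
      (g := fun (n:ℕ) x => x^(n+1)/((n:ℝ)+1)^2) (g' := fun (n:ℕ) x => x^n/((n:ℝ)+1))
      (summable_geometric_of_lt_one hr0.le hr1) (isOpen_Ioo (a := -r) (b := r))
      (convex_Ioo _ _).isPreconnected (y₀ := 0)
      (fun n x _ => ?_) (fun n x hx => ?_)
      (by simp only [Set.mem_Ioo]; constructor <;> linarith)
      (summable_zero.congr fun n => by simp)
      (by simp only [Set.mem_Ioo]; constructor <;> linarith)
    · have h := (hasDerivAt_pow (n+1) x).div_const (((n:ℝ)+1)^2)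
      simp only [Nat.add_sub_cancel] at h
      have he : (↑(n+1):ℝ) * x ^ n / ((n:ℝ)+1)^2 = x^n/((n:ℝ)+1) := by
        push_cast
        field_simp
      rwa [he] at h
    · have hxr : |x| ≤ r := by
        rw [abs_le]; exact ⟨hx.1.le, hx.2.le⟩
      have heq : ‖x^n/((n:ℝ)+1)‖ = |x|^n / ((n:ℝ)+1) := by
        rw [norm_div, norm_pow, Real.norm_eq_abs, Real.norm_eq_abs,
          abs_of_nonneg (by positivity : (0:ℝ) ≤ (n:ℝ)+1)]
      rw [heq, div_le_iff₀ (by positivity)]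
      have h1 : |x|^n ≤ r^n := pow_le_pow_left₀ (abs_nonneg x) hxr n
      nlinarith [pow_nonneg (abs_nonneg x) n, pow_nonneg hr0.le n,
        Nat.cast_nonneg (α := ℝ) n]
  have hval : ∑' n : ℕ, y^n/((n:ℝ)+1) = -Real.log (1-y)/y := by
    have hlog := (hasSum_pow_div_log_of_abs_lt_one habs).tsum_eq
    have h2 : ∑' n : ℕ, y^n/((n:ℝ)+1) = y⁻¹ * ∑' n : ℕ, y^(n+1)/((n:ℝ)+1) := by
      rw [← tsum_mul_left]
      refine tsum_congr fun n => ?_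
      rw [pow_succ]
      field_simp
    rw [h2]
    rw [show ∑' n : ℕ, y^(n+1)/((n:ℝ)+1) = -Real.log (1-y) by rw [← hlog]]
    rw [inv_mul_eq_div]
  rwa [hval] at hD


lemma summable_harm_geom {t : ℝ} (h0 : 0 ≤ t) (h1 : t < 1) :
    Summable (fun k : ℕ => harm (k+1) * t^(k+1)) := by
  have base : Summable (fun n : ℕ => (n:ℝ)^(1:ℕ) * t^n) :=
    summable_pow_mul_geometric_of_norm_lt_one 1
      (by rwa [Real.norm_eq_abs, abs_of_nonneg h0])
  have h := (summable_nat_add_iff 1).2 base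
  refine Summable.of_nonneg_of_le
    (fun k => mul_nonneg (harm_nonneg _) (by positivity)) (fun k => ?_) h
  have h2 := harm_le_linear (k+1)
  have ht : (0:ℝ) ≤ t^(k+1) := by positivity
  calc harm (k+1) * t^(k+1) ≤ ((k+1:ℕ):ℝ) * t^(k+1) :=
        mul_le_mul_of_nonneg_right (by exact_mod_cast h2) ht
    _ = ((k+1:ℕ):ℝ)^(1:ℕ) * t^(k+1) := by rw [pow_one]

lemma hasSum_harm_geom {t : ℝ} (h0 : 0 ≤ t) (h1 : t < 1) :
    HasSum (fun k : ℕ => harm (k+1) * t^(k+1)) (-Real.log (1-t) / (1-t)) := by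
  have hs := summable_harm_geom h0 h1
  have habs : |t| < 1 := abs_lt.mpr ⟨by linarith, h1⟩
  have hlog := (hasSum_pow_div_log_of_abs_lt_one habs).tsum_eq
  set a := ∑' k : ℕ, harm (k+1) * t^(k+1) with ha
  have hs2 : Summable (fun k : ℕ => harm (k+2) * t^(k+2)) := (summable_nat_add_iff 1).2 hs
  have hT : Summable (fun k : ℕ => harm (k+1) * t^(k+2)) :=
    (hs.mul_left t).congr fun k => by ring
  have hta : t * a = ∑' k : ℕ, harm (k+1) * t^(k+2) := by
    rw [← tsum_mul_left]
    exact tsum_congr fun k => by ring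
  have hshift : a = harm 1 * t^1 + ∑' k : ℕ, harm (k+2) * t^(k+2) := by
    rw [ha, Summable.tsum_eq_zero_add hs]
  have hdiff : ∑' k:ℕ, harm (k+2) * t^(k+2) - ∑' k:ℕ, harm (k+1) * t^(k+2)
      = ∑' k:ℕ, t^(k+2)/((k:ℝ)+2) := by
    rw [← Summable.tsum_sub hs2 hT]
    refine tsum_congr fun k => ?_
    rw [harm_succ (k+1)]
    push_cast
    ring
  have hlog2 : -Real.log (1-t) = t + ∑' k:ℕ, t^(k+2)/((k:ℝ)+2) := by
    rw [← hlog, Summable.tsum_eq_zero_add (hasSum_pow_div_log_of_abs_lt_one habs).summable]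
    congr 1
    · norm_num
    · refine tsum_congr fun k => ?_
      push_cast
      ring_nf
  have key : (1-t) * a = -Real.log (1-t) := by
    have e1 : (1-t) * a = a - t * a := by ring
    rw [e1, hta, hshift, add_sub_assoc, hdiff, hlog2]
    congr 1
    simp [harm]
  have hne : (1:ℝ) - t ≠ 0 := by intro h; rw [sub_eq_zero] at h; exact absurd h.symm (ne_of_lt h1)
  have : a = -Real.log (1-t) / (1-t) := by
    field_simp
    linarith [key]
  exact hs.hasSum_iff.mpr this

def Qf (k : ℕ) (x : ℝ) : ℝ :=
  harm (k+1) / 2 * (x^(2*k+3)/(2*(k:ℝ)+3) - x^(2*k+4)/(2*(k:ℝ)+4))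

def Q (x : ℝ) : ℝ := ∑' k, Qf k x

lemma Qf_nonneg {k : ℕ} {x : ℝ} (h0 : 0 ≤ x) (h1 : x ≤ 1) : 0 ≤ Qf k x := by
  unfold Qf
  have hp : x^(2*k+4) ≤ x^(2*k+3) := pow_le_pow_of_le_one h0 h1 (by omega)
  have hc : x^(2*k+4)/(2*(k:ℝ)+4) ≤ x^(2*k+3)/(2*(k:ℝ)+3) := by
    have c1 : x^(2*k+4)/(2*(k:ℝ)+4) ≤ x^(2*k+3)/(2*(k:ℝ)+4) :=
      (div_le_div_iff_of_pos_right (by positivity)).mpr hp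
    have c2 : x^(2*k+3)/(2*(k:ℝ)+4) ≤ x^(2*k+3)/(2*(k:ℝ)+3) := by
      rw [div_le_div_iff₀ (by positivity) (by positivity)]
      nlinarith [pow_nonneg h0 (2*k+3)]
    linarith
  have h2 : 0 ≤ harm (k+1) / 2 := div_nonneg (harm_nonneg _) (by norm_num)
  exact mul_nonneg h2 (sub_nonneg.mpr hc)

lemma Qf_core_bound {k : ℕ} {x : ℝ} (h0 : 0 ≤ x) (h1 : x ≤ 1) :
    x^(2*k+3)/(2*(k:ℝ)+3) - x^(2*k+4)/(2*(k:ℝ)+4) ≤ 2/((k:ℝ)+1)^2 := by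
  have hp : (0:ℝ) ≤ x^(2*k+3) := by positivity
  have hle1 : x^(2*k+3) ≤ 1 := pow_le_one₀ h0 h1
  have hmul : x^(2*k+3) * (1-x) ≤ 1/(2*(k:ℝ)+4) := by
    have h := pow_mul_one_sub_le h0 h1 (2*k+3)
    have h' : ((2*k+3:ℕ):ℝ)+1 = 2*(k:ℝ)+4 := by push_cast; ring
    rwa [h'] at h
  have key : x^(2*k+3)/(2*(k:ℝ)+3) - x^(2*k+4)/(2*(k:ℝ)+4)
      = x^(2*k+3) * (1/(2*(k:ℝ)+3) - 1/(2*(k:ℝ)+4))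
        + (x^(2*k+3)*(1-x)) * (1/(2*(k:ℝ)+4)) := by
    have e1 : x^(2*k+4) = x^(2*k+3) * x := by ring
    rw [e1]
    field_simp
    ring
  rw [key]
  have hb1 : 1/(2*(k:ℝ)+3) - 1/(2*(k:ℝ)+4) ≤ 1/((k:ℝ)+1)^2 := by
    rw [div_sub_div _ _ (by positivity) (by positivity), div_le_div_iff₀ (by positivity) (by positivity)]
    nlinarith [sq_nonneg ((k:ℝ)), Nat.cast_nonneg (α := ℝ) k]
  have hb1' : (0:ℝ) ≤ 1/(2*(k:ℝ)+3) - 1/(2*(k:ℝ)+4) := by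
    rw [sub_nonneg, div_le_div_iff₀ (by positivity) (by positivity)]
    linarith
  have hb2 : (1:ℝ)/(2*(k:ℝ)+4) ≤ 1/((k:ℝ)+1) := by
    rw [div_le_div_iff₀ (by positivity) (by positivity)]
    linarith [Nat.cast_nonneg (α := ℝ) k]
  have hmul0 : (0:ℝ) ≤ x^(2*k+3)*(1-x) := mul_nonneg hp (by linarith)
  calc x^(2*k+3) * (1/(2*(k:ℝ)+3) - 1/(2*(k:ℝ)+4)) + (x^(2*k+3)*(1-x)) * (1/(2*(k:ℝ)+4))
      ≤ 1 * (1/((k:ℝ)+1)^2) + (1/(2*(k:ℝ)+4)) * (1/((k:ℝ)+1)) :=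
        add_le_add (mul_le_mul hle1 hb1 hb1' zero_le_one)
          (mul_le_mul hmul hb2 (by positivity) (by positivity))
    _ ≤ 1 * (1/((k:ℝ)+1)^2) + (1/((k:ℝ)+1)) * (1/((k:ℝ)+1)) :=
        add_le_add_right (mul_le_mul_of_nonneg_right hb2 (by positivity)) _
    _ = 2/((k:ℝ)+1)^2 := by
        have hk : ((k:ℝ)+1) ≠ 0 := by positivity
        field_simp
        ring

lemma Qf_norm_bound {k : ℕ} {x : ℝ} (h0 : 0 ≤ x) (h1 : x ≤ 1) :
    ‖Qf k x‖ ≤ harm (k+1) / ((k:ℝ)+1)^2 := by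
  rw [Real.norm_eq_abs, abs_of_nonneg (Qf_nonneg h0 h1)]
  unfold Qf
  have hcb := Qf_core_bound (k := k) h0 h1
  have hh : 0 ≤ harm (k+1)/2 := div_nonneg (harm_nonneg _) (by norm_num)
  calc harm (k+1)/2 * (x^(2*k+3)/(2*(k:ℝ)+3) - x^(2*k+4)/(2*(k:ℝ)+4))
      ≤ harm (k+1)/2 * (2/((k:ℝ)+1)^2) := mul_le_mul_of_nonneg_left hcb hh
    _ = harm (k+1)/((k:ℝ)+1)^2 := by ring


lemma Qf_hasDerivAt (k : ℕ) (y : ℝ) :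
    HasDerivAt (Qf k) (harm (k+1)/2 * (y^(2*k+2) - y^(2*k+3))) y := by
  have h1 := (hasDerivAt_pow (2*k+3) y).div_const (2*(k:ℝ)+3)
  have h2 := (hasDerivAt_pow (2*k+4) y).div_const (2*(k:ℝ)+4)
  have e1 : 2*k+3-1 = 2*k+2 := by omega
  have e2 : 2*k+4-1 = 2*k+3 := by omega
  rw [e1] at h1
  rw [e2] at h2
  have h := (h1.sub h2).const_mul (harm (k+1)/2)
  have he : harm (k+1)/2 * ((↑(2*k+3):ℝ) * y^(2*k+2) / (2*(k:ℝ)+3)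
      - (↑(2*k+4):ℝ) * y^(2*k+3) / (2*(k:ℝ)+4))
      = harm (k+1)/2 * (y^(2*k+2) - y^(2*k+3)) := by
    have c1 : ((2*k+3:ℕ):ℝ) = 2*(k:ℝ)+3 := by push_cast; ring
    have c2 : ((2*k+4:ℕ):ℝ) = 2*(k:ℝ)+4 := by push_cast; ring
    rw [c1, c2]
    congr 1
    field_simp
  rw [he] at h
  exact h

lemma Q_contOn : ContinuousOn Q (Icc (0:ℝ) 1) := by
  refine continuousOn_tsum (fun k => Continuous.continuousOn ?_) summable_harm_sq
    (fun k x hx => Qf_norm_bound hx.1 hx.2)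
  unfold Qf
  fun_prop

lemma Q_zero : Q 0 = 0 := by
  unfold Q
  have : (fun k => Qf k 0) = fun _ => (0:ℝ) := by funext k; simp [Qf]
  rw [this, tsum_zero]

lemma Q_one : Q 1 = ∑' k : ℕ, harm (k+1) / (4*((k:ℝ)+2)*(2*(k:ℝ)+3)) := by
  unfold Q
  refine tsum_congr fun k => ?_
  unfold Qf
  rw [one_pow, one_pow]
  have h3 : (2*(k:ℝ)+3) ≠ 0 := by positivity
  have h4 : (2*(k:ℝ)+4) ≠ 0 := by positivity
  have h2 : ((k:ℝ)+2) ≠ 0 := by positivity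
  field_simp
  ring

lemma Q_hasDerivAt {x : ℝ} (hx : x ∈ Ico (0:ℝ) 1) :
    HasDerivAt Q (-(Real.log (1-x) + Real.log (1+x))/(2*(1+x))) x := by
  obtain ⟨hx0, hx1⟩ := hx
  set r : ℝ := (1+x)/2 with hrdef
  have hr1 : r < 1 := by rw [hrdef]; linarith
  have hr0 : 0 < r := by rw [hrdef]; linarith
  have hxr : x < r := by rw [hrdef]; linarith
  have hu : Summable (fun k : ℕ => harm (k+1) * r^(2*k+2)) := by
    have base := summable_harm_geom (t := r^2) (by positivity) (by nlinarith)
    exact base.congr fun k => by rw [← pow_mul]; ring_nf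
  have hD : HasDerivAt Q (∑' k : ℕ, harm (k+1)/2 * (x^(2*k+2) - x^(2*k+3))) x := by
    refine hasDerivAt_tsum_of_isPreconnected (u := fun k : ℕ => harm (k+1) * r^(2*k+2))
      (g := Qf) (g' := fun k y => harm (k+1)/2 * (y^(2*k+2) - y^(2*k+3)))
      hu (isOpen_Ioo (a := -r) (b := r)) (convex_Ioo _ _).isPreconnected (y₀ := 0)
      (fun k y _ => Qf_hasDerivAt k y) (fun k y hy => ?_)
      (by simp only [Set.mem_Ioo]; constructor <;> linarith)
      (summable_zero.congr fun k => by simp [Qf])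
      (by simp only [Set.mem_Ioo]; constructor <;> linarith)
    have hyr : |y| ≤ r := by rw [abs_le]; exact ⟨hy.1.le, hy.2.le⟩
    have hb1 : |y|^(2*k+2) ≤ r^(2*k+2) := pow_le_pow_left₀ (abs_nonneg y) hyr _
    have hb2 : |y|^(2*k+3) ≤ r^(2*k+2) := by
      calc |y|^(2*k+3) ≤ r^(2*k+3) := pow_le_pow_left₀ (abs_nonneg y) hyr _
        _ ≤ r^(2*k+2) := pow_le_pow_of_le_one hr0.le hr1.le (by omega)
    have hh : (0:ℝ) ≤ harm (k+1)/2 := div_nonneg (harm_nonneg _) (by norm_num)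
    calc ‖harm (k+1)/2 * (y^(2*k+2) - y^(2*k+3))‖
        = harm (k+1)/2 * ‖y^(2*k+2) - y^(2*k+3)‖ := by
          rw [norm_mul, Real.norm_eq_abs (harm (k+1)/2), abs_of_nonneg hh]
      _ ≤ harm (k+1)/2 * (|y|^(2*k+2) + |y|^(2*k+3)) := by
          refine mul_le_mul_of_nonneg_left ?_ hh
          calc ‖y^(2*k+2) - y^(2*k+3)‖ ≤ ‖y^(2*k+2)‖ + ‖y^(2*k+3)‖ := norm_sub_le _ _
            _ = |y|^(2*k+2) + |y|^(2*k+3) := by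
              rw [Real.norm_eq_abs, Real.norm_eq_abs, abs_pow, abs_pow]
      _ ≤ harm (k+1)/2 * (r^(2*k+2) + r^(2*k+2)) := by
          refine mul_le_mul_of_nonneg_left (add_le_add hb1 hb2) hh
      _ = harm (k+1) * r^(2*k+2) := by ring
  have hval : ∑' k : ℕ, harm (k+1)/2 * (x^(2*k+2) - x^(2*k+3))
      = -(Real.log (1-x) + Real.log (1+x))/(2*(1+x)) := by
    have ht1 : x^2 < 1 := by nlinarith
    have hs := hasSum_harm_geom (t := x^2) (by positivity) ht1
    have h1 : ∑' k : ℕ, harm (k+1)/2 * (x^(2*k+2) - x^(2*k+3))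
        = (1-x)/2 * ∑' k : ℕ, harm (k+1) * (x^2)^(k+1) := by
      rw [← tsum_mul_left]
      refine tsum_congr fun k => ?_
      rw [← pow_mul]
      ring
    rw [h1, hs.tsum_eq]
    have hp1 : (0:ℝ) < 1 - x := by linarith
    have hp2 : (0:ℝ) < 1 + x := by linarith
    have hfac : (1:ℝ) - x^2 = (1-x)*(1+x) := by ring
    rw [hfac, Real.log_mul (ne_of_gt hp1) (ne_of_gt hp2)]
    field_simp
  rwa [hval] at hD


lemma tendsto_mul_log_zero :
    Filter.Tendsto (fun t : ℝ => t * Real.log t) (𝓝[Set.Ici 0] 0) (𝓝 0) := by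
  have h1 : Filter.Tendsto (fun t : ℝ => t * Real.log t) (𝓝[>] 0) (𝓝 0) := by
    have h := tendsto_log_mul_rpow_nhdsGT_zero (r := 1) one_pos
    simp only [Real.rpow_one] at h
    exact h.congr fun t => by ring
  rw [← Set.Ioi_insert, nhdsWithin_insert, Filter.tendsto_sup]
  refine ⟨?_, h1⟩
  have : (fun t : ℝ => t * Real.log t) 0 = 0 := by simp
  simpa [this] using tendsto_pure_nhds (fun t : ℝ => t * Real.log t) 0

lemma contOn_loglog :
    ContinuousOn (fun x : ℝ => Real.log x * Real.log (1-x)) (Icc (1/2:ℝ) 1) := by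
  intro x hx
  rcases hx.2.lt_or_eq with hlt | heq
  · have h0 : (0:ℝ) < x := lt_of_lt_of_le (by norm_num) hx.1
    have h1 : (0:ℝ) < 1 - x := by linarith
    have c1 : ContinuousAt Real.log x := Real.continuousAt_log (ne_of_gt h0)
    have c2 : ContinuousAt (fun x : ℝ => Real.log (1-x)) x := by
      have := (Real.continuousAt_log (ne_of_gt h1)).comp
        ((continuous_const.sub continuous_id).continuousAt (x := x))
      exact this
    exact (c1.mul c2).continuousWithinAt
  · subst heq
    have hmap : Filter.Tendsto (fun x : ℝ => 1 - x) (𝓝[Icc (1/2:ℝ) 1] 1) (𝓝[Set.Ici 0] 0) := by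
      apply tendsto_nhdsWithin_of_tendsto_nhds_of_eventually_within
      · have hc : Continuous (fun x : ℝ => 1-x) := by fun_prop
        have h : Filter.Tendsto (fun x : ℝ => 1-x) (𝓝 1) (𝓝 0) := by
          simpa using hc.tendsto 1
        exact h.mono_left nhdsWithin_le_nhds
      · filter_upwards [self_mem_nhdsWithin] with y hy
        simp only [Set.mem_Ici]
        linarith [hy.2]
    have hcomp : Filter.Tendsto (fun x : ℝ => (1-x) * Real.log (1-x))
        (𝓝[Icc (1/2:ℝ) 1] 1) (𝓝 0) := tendsto_mul_log_zero.comp hmap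
    have hB : Filter.Tendsto (fun x : ℝ => 2*|(1-x) * Real.log (1-x)|)
        (𝓝[Icc (1/2:ℝ) 1] 1) (𝓝 0) := by
      have h := hcomp.abs
      simpa using h.const_mul 2
    have hbound : ∀ᶠ y in 𝓝[Icc (1/2:ℝ) 1] 1,
        ‖Real.log y * Real.log (1-y)‖ ≤ 2*|(1-y) * Real.log (1-y)| := by
      filter_upwards [self_mem_nhdsWithin] with y hy
      rcases hy.2.lt_or_eq with hy1 | hy1
      · have hy0 : (0:ℝ) < y := lt_of_lt_of_le (by norm_num) hy.1
        have hyy : (0:ℝ) < 1 - y := by linarith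
        have hlogy : |Real.log y| ≤ 2*(1-y) := by
          have hneg : Real.log y ≤ 0 := Real.log_nonpos hy0.le hy.2
          have hinv : Real.log y⁻¹ ≤ y⁻¹ - 1 := Real.log_le_sub_one_of_pos (by positivity)
          rw [Real.log_inv] at hinv
          have h2 : y⁻¹ - 1 ≤ 2*(1-y) := by
            have he : y⁻¹ - 1 = (1-y)/y := by field_simp
            rw [he, div_le_iff₀ hy0]
            have hprod : (0:ℝ) ≤ (1-y)*(2*y-1) := mul_nonneg hyy.le (by linarith [hy.1])
            nlinarith [hprod]
          rw [abs_of_nonpos hneg]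
          linarith
        calc ‖Real.log y * Real.log (1-y)‖ = |Real.log y| * |Real.log (1-y)| := by
              rw [Real.norm_eq_abs, abs_mul]
          _ ≤ (2*(1-y)) * |Real.log (1-y)| :=
              mul_le_mul_of_nonneg_right hlogy (abs_nonneg _)
          _ = 2*|(1-y) * Real.log (1-y)| := by
              rw [abs_mul, abs_of_nonneg (by linarith : (0:ℝ) ≤ 1-y)]
              ring
      · subst hy1
        norm_num
    have htend : Filter.Tendsto (fun x : ℝ => Real.log x * Real.log (1-x))
        (𝓝[Icc (1/2:ℝ) 1] 1) (𝓝 0) := squeeze_zero_norm' hbound hB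
    show Filter.Tendsto _ _ (𝓝 ((fun x : ℝ => Real.log x * Real.log (1-x)) 1))
    rw [show (fun x : ℝ => Real.log x * Real.log (1-x)) 1 = 0 by norm_num]
    exact htend

lemma P_half : P (1/2 : ℝ) = π^2/12 - (Real.log 2)^2/2 := by
  have hsub1 : Icc (1/2:ℝ) 1 ⊆ Icc (-1:ℝ) 1 := by
    intro y hy
    exact ⟨by linarith [hy.1], hy.2⟩
  have hcP : ContinuousOn (fun x : ℝ => P x) (Icc (1/2:ℝ) 1) := P_contOn.mono hsub1
  have hcP2 : ContinuousOn (fun x : ℝ => P (1-x)) (Icc (1/2:ℝ) 1) := by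
    refine P_contOn.comp ((continuous_const.sub continuous_id).continuousOn) ?_
    intro y hy
    simp only [Set.mem_Icc] at *
    constructor <;> [linarith [hy.2]; linarith [hy.1]]
  have fcont : ContinuousOn
      (fun x : ℝ => P x + P (1-x) + Real.log x * Real.log (1-x)) (Icc (1/2:ℝ) 1) :=
    (hcP.add hcP2).add contOn_loglog
  have hderiv : ∀ x ∈ Ico (1/2:ℝ) 1, HasDerivWithinAt
      (fun x : ℝ => P x + P (1-x) + Real.log x * Real.log (1-x)) ((fun _ : ℝ => (0:ℝ)) x)
      (Ici x) x := by
    intro x hx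
    have hx0 : (0:ℝ) < x := lt_of_lt_of_le (by norm_num) hx.1
    have hx1 : x < 1 := hx.2
    have h1 : HasDerivAt P (-Real.log (1-x)/x) x := P_hasDerivAt ⟨hx0, hx1⟩
    have ha : HasDerivAt (fun x : ℝ => 1-x) (-1) x := by
      simpa using (hasDerivAt_id x).const_sub 1
    have h2 : HasDerivAt (fun x : ℝ => P (1-x)) (Real.log x/(1-x)) x := by
      have hin : (1-x) ∈ Ioo (0:ℝ) 1 := ⟨by linarith, by linarith⟩
      have hcomp := (P_hasDerivAt hin).comp x ha
      refine hcomp.congr_deriv ?_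
      rw [show (1:ℝ)-(1-x) = x by ring]
      ring
    have h3 : HasDerivAt (fun x : ℝ => Real.log x * Real.log (1-x))
        (Real.log (1-x)/x - Real.log x/(1-x)) x := by
      have hl1 : HasDerivAt Real.log x⁻¹ x := Real.hasDerivAt_log (ne_of_gt hx0)
      have hl2 : HasDerivAt (fun x : ℝ => Real.log (1-x)) (-(1-x)⁻¹) x := by
        have := (Real.hasDerivAt_log (by linarith : (1:ℝ)-x ≠ 0)).comp x ha
        refine this.congr_deriv ?_
        ring
      have hm := hl1.mul hl2
      refine hm.congr_deriv ?_
      have hne1 : x ≠ 0 := ne_of_gt hx0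
      have hne2 : (1:ℝ)-x ≠ 0 := by linarith
      field_simp
      ring
    have total := (h1.add h2).add h3
    have hz : (-Real.log (1-x)/x + Real.log x/(1-x))
        + (Real.log (1-x)/x - Real.log x/(1-x)) = 0 := by ring
    rw [hz] at total
    exact total.hasDerivWithinAt
  have key := eq_of_has_deriv_right_eq (a := (1/2:ℝ)) (b := 1)
    (f' := fun _ : ℝ => (0:ℝ)) hderiv
    (fun x _ => (hasDerivAt_const x _).hasDerivWithinAt)
    fcont continuousOn_const rfl
  have h1 := key 1 (by constructor <;> norm_num)
  rw [P_one, show (1:ℝ)-1 = 0 by ring, P_zero, Real.log_one] at h1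
  have hhalf : (1:ℝ) - 1/2 = 1/2 := by norm_num
  rw [hhalf] at h1
  have hlog : Real.log (1/2:ℝ) = -Real.log 2 := by
    rw [show (1/2:ℝ) = 2⁻¹ by norm_num, Real.log_inv]
  rw [hlog] at h1
  nlinarith [h1]

lemma phi_contOn : ContinuousOn
    (fun x : ℝ => -(Real.log (1+x))^2/4 - Real.log 2/2 * Real.log (1+x) + P ((1+x)/2) / 2)
    (Icc (0:ℝ) 1) := by
  have hlog : ContinuousOn (fun x : ℝ => Real.log (1+x)) (Icc (0:ℝ) 1) := by
    refine ContinuousOn.log (by fun_prop) ?_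
    intro x hx
    have := hx.1
    intro h
    simp only [Set.mem_Icc] at hx
    linarith [hx.1]
  have hPc : ContinuousOn (fun x : ℝ => P ((1+x)/2)) (Icc (0:ℝ) 1) := by
    refine P_contOn.comp (by fun_prop : Continuous fun x : ℝ => (1+x)/2).continuousOn ?_
    intro x hx
    simp only [Set.mem_Icc] at *
    constructor <;> linarith [hx.1, hx.2]
  exact (((hlog.pow 2).neg.div_const 4).sub (continuousOn_const.mul hlog)).add
    (hPc.div_const 2)

lemma phi_hasDerivAt {x : ℝ} (hx : x ∈ Ico (0:ℝ) 1) :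
    HasDerivAt
      (fun x : ℝ => -(Real.log (1+x))^2/4 - Real.log 2/2 * Real.log (1+x) + P ((1+x)/2) / 2)
      (-(Real.log (1-x) + Real.log (1+x))/(2*(1+x))) x := by
  obtain ⟨hx0, hx1⟩ := hx
  have hp2 : (0:ℝ) < 1 + x := by linarith
  have hl : HasDerivAt (fun x : ℝ => Real.log (1+x)) ((1+x)⁻¹) x := by
    have ha : HasDerivAt (fun x : ℝ => 1+x) 1 x := by
      simpa using (hasDerivAt_id x).const_add 1
    have := (Real.hasDerivAt_log (ne_of_gt hp2)).comp x ha
    exact this.congr_deriv (mul_one _)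
  have hmid : (1+x)/2 ∈ Ioo (0:ℝ) 1 := ⟨by linarith, by linarith⟩
  have haff : HasDerivAt (fun x : ℝ => (1+x)/2) (1/2) x := by
    simpa using ((hasDerivAt_id x).const_add 1).div_const 2
  have hP := (P_hasDerivAt hmid).comp x haff
  have total := ((((hl.pow 2).neg).div_const 4).sub (hl.const_mul (Real.log 2/2))).add
    (hP.div_const 2)
  refine total.congr_deriv ?_
  have hhalf : (1:ℝ) - (1+x)/2 = (1-x)/2 := by ring
  rw [hhalf, Real.log_div (by linarith : (1:ℝ)-x ≠ 0) (by norm_num : (2:ℝ) ≠ 0)]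
  have hne1 : (1:ℝ)+x ≠ 0 := ne_of_gt hp2
  push_cast
  simp only [pow_one]
  field_simp
  ring


def fp (p : ℕ × ℕ) : ℝ :=
  1 / (4 * ((p.1:ℝ) + 1) * ((p.1:ℝ) + (p.2:ℝ) + 2) * (2 * ((p.1:ℝ) + (p.2:ℝ) + 2) - 1))

lemma fp_nonneg (p : ℕ × ℕ) : 0 ≤ fp p := by
  unfold fp
  have h1 : (0:ℝ) ≤ (p.1:ℝ) := Nat.cast_nonneg _
  have h2 : (0:ℝ) ≤ (p.2:ℝ) := Nat.cast_nonneg _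
  have : (0:ℝ) < 2 * ((p.1:ℝ) + (p.2:ℝ) + 2) - 1 := by linarith
  positivity

lemma fp_le (p : ℕ × ℕ) : fp p ≤ 8⁻¹ *
    (((((p.1:ℝ)+1) * Real.sqrt ((p.1:ℝ)+1))⁻¹) * ((((p.2:ℝ)+1) * Real.sqrt ((p.2:ℝ)+1))⁻¹)) := by
  set m : ℝ := (p.1:ℝ) + 1 with hm
  set q : ℝ := (p.2:ℝ) + 1 with hq
  have hm1 : (1:ℝ) ≤ m := by rw [hm]; linarith [Nat.cast_nonneg (α := ℝ) p.1]
  have hq1 : (1:ℝ) ≤ q := by rw [hq]; linarith [Nat.cast_nonneg (α := ℝ) p.2]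
  have hm0 : (0:ℝ) < m := by linarith
  have hq0 : (0:ℝ) < q := by linarith
  have hsm0 : (0:ℝ) < Real.sqrt m := Real.sqrt_pos.mpr hm0
  have hsq0 : (0:ℝ) < Real.sqrt q := Real.sqrt_pos.mpr hq0
  have hsm : Real.sqrt m * Real.sqrt m = m := Real.mul_self_sqrt hm0.le
  have hsq : Real.sqrt q * Real.sqrt q = q := Real.mul_self_sqrt hq0.le
  have hcast : (p.1:ℝ) + (p.2:ℝ) + 2 = m + q := by rw [hm, hq]; ring
  have hfp : fp p = 1 / (4 * m * (m+q) * (2*(m+q)-1)) := by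
    unfold fp
    rw [hcast, hm]
  rw [hfp]
  have hAM : 2 * Real.sqrt m * Real.sqrt q ≤ m + q := by
    nlinarith [sq_nonneg (Real.sqrt m - Real.sqrt q)]
  have h5 : (m+q)*(m+q) ≤ (m+q)*(2*(m+q)-1) := by nlinarith
  have h6 : (2*Real.sqrt m*Real.sqrt q)*q ≤ (m+q)*(m+q) :=
    mul_le_mul hAM (by linarith) hq0.le (by linarith)
  have hkey : 8 * (m * Real.sqrt m) * (q * Real.sqrt q) ≤ 4 * m * (m+q) * (2*(m+q)-1) := by
    have h7 : (2*Real.sqrt m*Real.sqrt q)*q ≤ (m+q)*(2*(m+q)-1) := le_trans h6 h5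
    have h8 : 4*m*((2*Real.sqrt m*Real.sqrt q)*q) ≤ 4*m*((m+q)*(2*(m+q)-1)) :=
      mul_le_mul_of_nonneg_left h7 (by linarith)
    calc 8 * (m * Real.sqrt m) * (q * Real.sqrt q)
        = 4*m*((2*Real.sqrt m*Real.sqrt q)*q) := by nlinarith [hsq]
      _ ≤ 4*m*((m+q)*(2*(m+q)-1)) := h8
      _ = 4 * m * (m+q) * (2*(m+q)-1) := by ring
  have hpos : (0:ℝ) < 8 * (m * Real.sqrt m) * (q * Real.sqrt q) := by positivity
  have := one_div_le_one_div_of_le hpos hkey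
  refine le_trans this ?_
  rw [one_div, mul_inv, mul_inv]
  ring_nf
  exact le_rfl

lemma fp_summable : Summable fp :=
  Summable.of_nonneg_of_le fp_nonneg fp_le
    ((summable_rpow32.mul_of_nonneg summable_rpow32
      (fun k => by positivity) (fun k => by positivity)).mul_left 8⁻¹)

lemma diag_sum (n : ℕ) : ∑ p ∈ Finset.HasAntidiagonal.antidiagonal n, fp p
    = harm (n+1) / (4*((n:ℝ)+2)*(2*(n:ℝ)+3)) := by
  rw [Finset.Nat.sum_antidiagonal_eq_sum_range_succ_mk]
  have hterm : ∀ i ∈ Finset.range (n+1),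
      fp (i, n-i) = 1/(4*((n:ℝ)+2)*(2*(n:ℝ)+3)) * (1/((i:ℝ)+1)) := by
    intro i hi
    have hi' : i ≤ n := Nat.lt_succ_iff.mp (Finset.mem_range.mp hi)
    unfold fp
    simp only
    have hcast : (((n-i : ℕ)):ℝ) = (n:ℝ) - (i:ℝ) := by
      rw [Nat.cast_sub hi']
    rw [hcast, show (i:ℝ) + ((n:ℝ) - (i:ℝ)) + 2 = (n:ℝ)+2 by ring]
    have h1 : ((i:ℝ)+1) ≠ 0 := by positivity
    have h2 : ((n:ℝ)+2) ≠ 0 := by positivity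
    have h3 : (2*((n:ℝ)+2)-1) ≠ 0 := by
      have : (0:ℝ) ≤ (n:ℝ) := Nat.cast_nonneg n
      intro h; nlinarith
    have h4 : (2*(n:ℝ)+3) ≠ 0 := by positivity
    field_simp
    ring
  rw [Finset.sum_congr rfl hterm, ← Finset.mul_sum, one_div_mul_eq_div]
  rfl

lemma sum_eq_Q_one :
    (∑' (i : ℕ) (j : ℕ),
        (1 : ℝ) / (4 * ((i : ℝ) + 1) * ((i : ℝ) + (j : ℝ) + 2) * (2 * ((i : ℝ) + (j : ℝ) + 2) - 1)))
      = Q 1 := by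
  have hs := fp_summable
  have h1 : (∑' (i : ℕ) (j : ℕ),
        (1 : ℝ) / (4 * ((i : ℝ) + 1) * ((i : ℝ) + (j : ℝ) + 2) * (2 * ((i : ℝ) + (j : ℝ) + 2) - 1)))
      = ∑' p : ℕ × ℕ, fp p := (Summable.tsum_prod' hs fun b => hs.prod_factor b).symm
  rw [h1]
  have e := Finset.HasAntidiagonal.sigmaAntidiagonalEquivProd (A := ℕ)
  have h2 : ∑' p : ℕ × ℕ, fp p
      = ∑' σ : (Σ n : ℕ, Finset.HasAntidiagonal.antidiagonal n), fp (Finset.HasAntidiagonal.sigmaAntidiagonalEquivProd σ) :=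
    (Equiv.tsum_eq Finset.HasAntidiagonal.sigmaAntidiagonalEquivProd fp).symm
  rw [h2]
  have hsig : Summable (fun σ : (Σ n : ℕ, Finset.HasAntidiagonal.antidiagonal n) =>
      fp (Finset.HasAntidiagonal.sigmaAntidiagonalEquivProd σ)) :=
    (Equiv.summable_iff Finset.HasAntidiagonal.sigmaAntidiagonalEquivProd).mpr hs
  rw [Summable.tsum_sigma' (fun n => Summable.of_finite) hsig]
  rw [Q_one]
  refine tsum_congr fun n => ?_
  have hinner : ∑' (c : Finset.HasAntidiagonal.antidiagonal n),
      fp (Finset.HasAntidiagonal.sigmaAntidiagonalEquivProd ⟨n, c⟩) = ∑ p ∈ Finset.HasAntidiagonal.antidiagonal n, fp p := by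
    have := Finset.tsum_subtype (Finset.HasAntidiagonal.antidiagonal n) fp
    convert this using 1
    rfl
  rw [hinner, diag_sum]

theorem stmt5 :
    (∑' (i : ℕ) (j : ℕ),
        (1 : ℝ) / (4 * ((i : ℝ) + 1) * ((i : ℝ) + (j : ℝ) + 2) * (2 * ((i : ℝ) + (j : ℝ) + 2) - 1)))
      = (Real.pi ^ 2 / 6) / 4 - (Real.log 2) ^ 2 / 2 := by
  rw [sum_eq_Q_one]
  set phi : ℝ → ℝ :=
    fun x : ℝ => -(Real.log (1+x))^2/4 - Real.log 2/2 * Real.log (1+x) + P ((1+x)/2) / 2 with hphi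
  have key := eq_of_has_deriv_right_eq (a := (0:ℝ)) (b := 1)
    (f' := fun x : ℝ => -(Real.log (1-x) + Real.log (1+x))/(2*(1+x)))
    (f := Q) (g := fun x => phi x + (Q 0 - phi 0))
    (fun x hx => (Q_hasDerivAt hx).hasDerivWithinAt)
    (fun x hx => ((phi_hasDerivAt hx).add_const _).hasDerivWithinAt)
    Q_contOn (phi_contOn.add continuousOn_const)
    (by ring)
  have h1 := key 1 (by constructor <;> norm_num)
  rw [Q_zero] at h1
  have hphi1 : phi 1 = -(Real.log 2)^2/4 - Real.log 2/2 * Real.log 2 + (π^2/6)/2 := by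
    rw [hphi]
    simp only
    norm_num [P_one]
  have hphi0 : phi 0 = π^2/24 - (Real.log 2)^2/4 := by
    rw [hphi]
    simp only
    norm_num [P_half]
    ring
  rw [h1, hphi1, hphi0]
  ring

end
end

section
/- For positive integers n and k ≥ 2, ∫₀¹ x^{n-1} Li_k(x) dx = ∑_{j=1}^{k-1} (-1)^{j-1} ζ(k+1-j)/n^j + (-1)^{k-1} H_n / n^k, where H_n = ∑_{m=1}^n 1/m is the n-th harmonic number. -/
/-- The classical polylogarithm `Li_k(x) = ∑_{m≥1} x^m / m^k`. -/
noncomputable def Li (k : ℕ) (x : ℝ) : ℝ := ∑' m : ℕ, x ^ (m + 1) / ((m : ℝ) + 1) ^ k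

/-- Riemann zeta value `ζ(s) = ∑_{m≥1} 1/m^s`. -/
noncomputable def zetaVal (s : ℕ) : ℝ := ∑' m : ℕ, (1 : ℝ) / ((m : ℝ) + 1) ^ s

/-- Harmonic number. -/
noncomputable def harmonicNum (n : ℕ) : ℝ := ∑ m ∈ Finset.Icc 1 n, (1 : ℝ) / m

/-!
Integrating termwise, `∫₀¹ x^(n-1) Li_k(x) dx = S_k := ∑_{m ≥ 1} 1 / (m^k (m + n))`. The partial
fraction `1 / (m^(k+1) (m + n)) = (1 / m^(k+1) - 1 / (m^k (m + n))) / n` gives the recursion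
`S_(k+1) = (ζ(k+1) - S_k) / n`, and `S_1 = H_n / n` because `n / (m (m + n)) = 1/m - 1/(m + n)`
telescopes. Unrolling the recursion down to `S_1` yields the formula.
-/

open Filter Finset

lemma sum_range_sub_sum_range_shift {G : Type*} [AddCommGroup G] (f : ℕ → G) (n M : ℕ) :
    ∑ m ∈ range M, (f m - f (m + n)) = ∑ i ∈ range n, f i - ∑ i ∈ range n, f (M + i) := by
  have h := (sum_range_add f M n).symm.trans (add_comm M n ▸ sum_range_add f n M)
  simp only [sum_sub_distrib, add_comm _ n]
  rw [sub_eq_sub_iff_add_eq_add, h]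

lemma hasSum_sub_shift {G : Type*} [AddCommGroup G] [TopologicalSpace G] [IsTopologicalAddGroup G]
    [T2Space G] {f : ℕ → G} {n : ℕ} (hf : Tendsto f atTop (nhds 0))
    (hs : Summable fun m => f m - f (m + n)) :
    HasSum (fun m => f m - f (m + n)) (∑ i ∈ range n, f i) := by
  have htail : Tendsto (fun M => ∑ i ∈ range n, f (M + i)) atTop (nhds 0) := by
    simpa using tendsto_finsetSum (range n) fun i _ => hf.comp (tendsto_add_atTop_nat i)
  have hpartial := (tendsto_const_nhds (x := ∑ i ∈ range n, f i)).sub htail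
  simp only [← sum_range_sub_sum_range_shift, sub_zero] at hpartial
  convert hs.hasSum
  exact tendsto_nhds_unique hpartial hs.hasSum.tendsto_sum_nat

lemma summable_one_div_nat_add_one_pow {s : ℕ} (hs : 1 < s) :
    Summable fun m : ℕ => 1 / ((m : ℝ) + 1) ^ s := by
  simpa using (summable_nat_add_iff 1).mpr (Real.summable_one_div_nat_pow.mpr hs)

noncomputable def shiftedZeta (k : ℕ) (a : ℝ) : ℝ :=
  ∑' m : ℕ, 1 / (((m : ℝ) + 1) ^ k * ((m : ℝ) + 1 + a))

lemma summable_shiftedZeta {k : ℕ} (hk : 1 ≤ k) {a : ℝ} (ha : 0 ≤ a) :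
    Summable fun m : ℕ => 1 / (((m : ℝ) + 1) ^ k * ((m : ℝ) + 1 + a)) := by
  refine (summable_one_div_nat_add_one_pow (s := k + 1) (by omega)).of_nonneg_of_le
    (fun m => by positivity) fun m => ?_
  rw [pow_succ]
  exact one_div_le_one_div_of_le (by positivity)
    (mul_le_mul_of_nonneg_left (le_add_of_nonneg_right ha) (by positivity))

lemma shiftedZeta_succ {k : ℕ} (hk : 1 ≤ k) {a : ℝ} (ha : 0 < a) :
    shiftedZeta (k + 1) a = (zetaVal (k + 1) - shiftedZeta k a) / a := by
  have hsplit : ∀ m : ℕ, 1 / (((m : ℝ) + 1) ^ (k + 1) * ((m : ℝ) + 1 + a))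
      = (1 / ((m : ℝ) + 1) ^ (k + 1) - 1 / (((m : ℝ) + 1) ^ k * ((m : ℝ) + 1 + a))) / a := by
    intro m
    field_simp
    ring
  rw [shiftedZeta, tsum_congr hsplit, tsum_div_const,
    (summable_one_div_nat_add_one_pow (by omega)).tsum_sub (summable_shiftedZeta hk ha.le)]
  rfl

lemma shiftedZeta_one {n : ℕ} (hn : 0 < n) : shiftedZeta 1 n = harmonicNum n / n := by
  have hsplit : ∀ m : ℕ, 1 / (((m : ℝ) + 1) ^ 1 * ((m : ℝ) + 1 + n))
      = (1 / ((m : ℝ) + 1) - 1 / (((m + n : ℕ) : ℝ) + 1)) / n := by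
    intro m
    push_cast
    field_simp
    ring
  have hs : Summable fun m : ℕ => 1 / ((m : ℝ) + 1) - 1 / (((m + n : ℕ) : ℝ) + 1) := by
    refine ((summable_shiftedZeta le_rfl n.cast_nonneg).mul_right (n : ℝ)).congr fun m => ?_
    rw [hsplit, div_mul_cancel₀ _ (by positivity)]
  have hH : harmonicNum n = ∑ i ∈ range n, 1 / ((i : ℝ) + 1) := by
    rw [harmonicNum, ← Ico_add_one_right_eq_Icc, sum_Ico_eq_sum_range]
    simp [add_comm]
  rw [shiftedZeta, tsum_congr hsplit, tsum_div_const,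
    (hasSum_sub_shift tendsto_one_div_add_atTop_nhds_zero_nat hs).tsum_eq, hH]

lemma eq_sum_of_succ_eq_sub_div {K : Type*} [Field K] {a b : ℕ → K} {x : K}
    (h : ∀ p, a (p + 1) = (b (p + 1) - a p) / x) (p : ℕ) :
    a p = ∑ i ∈ range p, (-1) ^ i * b (p - i) / x ^ (i + 1) + (-1) ^ p * a 0 / x ^ p := by
  induction p with
  | zero => simp
  | succ p ih =>
    have hterm : ∀ i ∈ range p, (-1) ^ (i + 1) * b (p + 1 - (i + 1)) / x ^ (i + 1 + 1)
        = -((-1) ^ i * b (p - i) / x ^ (i + 1) / x) := fun i _ => by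
      rw [Nat.add_sub_add_right]
      ring
    rw [h, ih, sum_range_succ', sum_congr rfl hterm, Nat.sub_zero, sum_neg_distrib, ← sum_div]
    ring

open MeasureTheory in
lemma integral_pow_mul_Li (n : ℕ) {k : ℕ} (hk : 1 ≤ k) :
    ∫ x in (0 : ℝ)..1, x ^ n * Li k x = shiftedZeta k (n + 1) := by
  set F : ℕ → ℝ → ℝ := fun m x => x ^ (n + m + 1) / ((m : ℝ) + 1) ^ k
  have hF : ∀ x, x ^ n * Li k x = ∑' m, F m x := fun x => by
    simp only [F, Li, ← tsum_mul_left, ← mul_div_assoc, ← pow_add, add_assoc]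
  have hF_int : ∀ m, ∫ x in Set.Ioc (0 : ℝ) 1, F m x
      = 1 / (((m : ℝ) + 1) ^ k * ((m : ℝ) + 1 + (n + 1))) := fun m => by
    rw [integral_div, ← intervalIntegral.integral_of_le zero_le_one, integral_pow]
    push_cast
    field_simp
    ring
  have hF_norm : ∀ m, ∫ x in Set.Ioc (0 : ℝ) 1, ‖F m x‖ = ∫ x in Set.Ioc (0 : ℝ) 1, F m x :=
    fun m => setIntegral_congr_fun measurableSet_Ioc fun x hx => by
      simp only [Real.norm_eq_abs, abs_eq_self, F]
      have := hx.1.le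
      positivity
  rw [intervalIntegral.integral_of_le zero_le_one, funext hF,
    ← integral_tsum_of_summable_integral_norm
      (fun m => ((continuous_pow _).div_const _).integrableOn_Ioc) ?_]
  · exact tsum_congr hF_int
  · exact (summable_shiftedZeta hk (a := (n : ℝ) + 1) (by positivity)).congr fun m =>
      ((hF_norm m).trans (hF_int m)).symm

theorem stmt9 (n k : ℕ) (hn : 0 < n) (hk : 2 ≤ k) :
    ∫ x in (0:ℝ)..1, x ^ (n - 1) * Li k x
      = (∑ j ∈ Finset.Icc 1 (k - 1), (-1 : ℝ) ^ (j - 1) * zetaVal (k + 1 - j) / (n : ℝ) ^ j)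
        + (-1 : ℝ) ^ (k - 1) * harmonicNum n / (n : ℝ) ^ k := by
  obtain ⟨p, rfl⟩ := Nat.exists_eq_add_one_of_ne_zero (by omega : k ≠ 0)
  have hn' : (0 : ℝ) < n := by exact_mod_cast hn
  have hunroll := eq_sum_of_succ_eq_sub_div (a := fun p => shiftedZeta (p + 1) n)
    (b := fun p => zetaVal (p + 1)) (fun p => shiftedZeta_succ (by omega) hn') p
  have hreindex : ∑ j ∈ Icc 1 p, (-1 : ℝ) ^ (j - 1) * zetaVal (p + 1 + 1 - j) / (n : ℝ) ^ j
      = ∑ i ∈ range p, (-1) ^ i * zetaVal (p - i + 1) / (n : ℝ) ^ (i + 1) := by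
    rw [← Ico_add_one_right_eq_Icc, sum_Ico_eq_sum_range]
    refine sum_congr rfl fun i hi => ?_
    rw [add_comm 1 i, Nat.add_sub_cancel]
    congr 3
    have := mem_range.mp hi
    omega
  obtain ⟨n, rfl⟩ := Nat.exists_eq_add_one_of_ne_zero hn.ne'
  rw [Nat.add_sub_cancel, Nat.add_sub_cancel, integral_pow_mul_Li n (by omega : 1 ≤ p + 1),
    hreindex, ← Nat.cast_add_one, hunroll, zero_add, shiftedZeta_one hn, pow_succ _ p, ← div_div]
  ring
end
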